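/- arXiv:0903.2741 — 3 statements merged into one kernel-verified Lean document; each statement's English description precedes it below -/
import Mathlib

section
/- Let K be a real number field of degree d+1 with ring of integers O, basis α_0 = 1, α_1, ..., α_d of K over Q, and dual basis β_0, ..., β_d for the trace form. Let γ ∈ K be nonzero, let η ∈ O be a unit with −1 < η < 1 and N = |η|^{−1}, satisfying |σ_j(η)| ≍ N^{1/d} for 1 ≤ j ≤ d. Write γη = a_0 + a_1 α_1 + ... + a_d α_d with a_k ∈ Q. Then max_{0 ≤ k ≤ d} |a_k| ≍ N^{1/d}, with implicit constants depending only on K, the basis, and γ. -/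
/-!
The coefficient size `max_k |a_k|` of `x ∈ K` is comparable to its house `max_φ |φ x|`:
expanding `x = Σ a_k α_k` gives `house x ≪ max_k |a_k|`, and `a_k = Tr(x β_k) = Σ_φ φ(x β_k)`,
with `β` the trace-dual basis, gives the converse. For `x = γη` the hypotheses on `η` give
`house (γη) ≪ N^{1/d}`, while already `|σ_1(γη)| ≫ N^{1/d}`.
-/

open Finset NumberField

theorem Module.Basis.repr_eq_trace_mul_dualBasis {K L ι : Type*} [Field K] [Field L] [Algebra K L]
    [FiniteDimensional K L] [Algebra.IsSeparable K L] [Finite ι] [DecidableEq ι]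
    (b : Module.Basis ι K L) (x : L) (k : ι) :
    b.repr x k = Algebra.trace K L
      (x * (Algebra.traceForm K L).dualBasis (traceForm_nondegenerate K L) b k) := by
  conv_lhs => rw [← (Algebra.traceForm K L).dualBasis_dualBasis (traceForm_nondegenerate K L)
    (Algebra.traceForm_isSymm K) b]
  rw [LinearMap.BilinForm.dualBasis_repr_apply, Algebra.traceForm_apply]

namespace NumberField

variable {K : Type*} [Field K] [NumberField K]

theorem house_pos {x : K} (hx : x ≠ 0) : 0 < house x :=
  norm_pos_iff.mpr <| (map_ne_zero_iff _ (canonicalEmbedding_injective K)).mpr hx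

theorem house_ratCast_mul (q : ℚ) (x : K) : house ((q : K) * x) = |(q : ℝ)| * house x := by
  rw [house, house, ← Complex.norm_ratCast, ← norm_smul]
  congr 1
  ext φ
  simp [canonicalEmbedding.apply_at]

theorem house_le_of_forall_norm_le {ι : Type*} {σ : ι → K →+* ℂ} (hσ : Function.Surjective σ)
    {x : K} {M : ℝ} (h : ∀ j, ‖σ j x‖ ≤ M) : house x ≤ M :=
  (canonicalEmbedding.norm_le_iff x M).mpr fun φ ↦ by
    obtain ⟨j, rfl⟩ := hσ φ
    exact h j

theorem abs_trace_le_finrank_mul_house (x : K) :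
    |(Algebra.trace ℚ K x : ℝ)| ≤ Module.finrank ℚ K * house x := by
  calc |(Algebra.trace ℚ K x : ℝ)| = ‖∑ τ : K →ₐ[ℚ] ℂ, τ x‖ := by
        rw [← trace_eq_sum_embeddings ℂ, eq_ratCast, Complex.norm_ratCast]
    _ ≤ ∑ τ : K →ₐ[ℚ] ℂ, house x :=
        norm_sum_le_of_le _ fun τ _ ↦ norm_embedding_le_house x (τ : K →+* ℂ)
    _ = Module.finrank ℚ K * house x := by
        rw [sum_const, card_univ, AlgHom.card, nsmul_eq_mul]

variable {ι : Type*} [Fintype ι] [Nonempty ι]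

theorem house_le_sum_house_mul_sup_abs_repr (b : Module.Basis ι ℚ K) (x : K) :
    house x ≤ (∑ k, house (b k)) * univ.sup' univ_nonempty fun k ↦ |(b.repr x k : ℝ)| := by
  calc house x = house (∑ k, (b.repr x k : K) * b k) := by
        simp only [← Rat.smul_def, b.sum_repr]
    _ ≤ ∑ k, |(b.repr x k : ℝ)| * house (b k) := by
        simpa only [house_ratCast_mul] using
          house_sum_le_sum_house univ fun k ↦ (b.repr x k : K) * b k
    _ ≤ ∑ k, (univ.sup' univ_nonempty fun k ↦ |(b.repr x k : ℝ)|) * house (b k) :=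
        sum_le_sum fun k _ ↦ mul_le_mul_of_nonneg_right
          (le_sup' (fun k ↦ |(b.repr x k : ℝ)|) (mem_univ k)) (house_nonneg _)
    _ = _ := by rw [← mul_sum, mul_comm]

theorem sup_abs_repr_le_mul_house [DecidableEq ι] (b : Module.Basis ι ℚ K) (x : K) :
    (univ.sup' univ_nonempty fun k ↦ |(b.repr x k : ℝ)|) ≤
      (Module.finrank ℚ K * ∑ k, house
        ((Algebra.traceForm ℚ K).dualBasis (traceForm_nondegenerate ℚ K) b k)) * house x := by
  set β := (Algebra.traceForm ℚ K).dualBasis (traceForm_nondegenerate ℚ K) b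
  refine sup'_le _ _ fun k _ ↦ ?_
  calc |(b.repr x k : ℝ)| ≤ Module.finrank ℚ K * house (x * β k) := by
        rw [b.repr_eq_trace_mul_dualBasis]
        exact abs_trace_le_finrank_mul_house _
    _ ≤ Module.finrank ℚ K * (house (β k) * house x) := by
        rw [mul_comm x]
        gcongr
        exact house_mul_le _ _
    _ ≤ Module.finrank ℚ K * (∑ k, house (β k)) * house x := by
        rw [mul_assoc]
        gcongr
        · exact house_nonneg _
        · exact single_le_sum (fun k _ ↦ house_nonneg (β k)) (mem_univ k)

theorem exists_pos_mul_house_le_sup_abs_repr_le_mul_house (b : Module.Basis ι ℚ K) :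
    ∃ c C : ℝ, 0 < c ∧ 0 < C ∧ ∀ x : K,
      c * house x ≤ (univ.sup' univ_nonempty fun k ↦ |(b.repr x k : ℝ)|) ∧
      (univ.sup' univ_nonempty fun k ↦ |(b.repr x k : ℝ)|) ≤ C * house x := by
  classical
  set β := (Algebra.traceForm ℚ K).dualBasis (traceForm_nondegenerate ℚ K) b
  have hb : 0 < ∑ k, house (b k) := sum_pos (fun k _ ↦ house_pos (b.ne_zero k)) univ_nonempty
  have hβ : 0 < ∑ k, house (β k) := sum_pos (fun k _ ↦ house_pos (β.ne_zero k)) univ_nonempty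
  refine ⟨(∑ k, house (b k))⁻¹, Module.finrank ℚ K * ∑ k, house (β k), inv_pos.mpr hb,
    mul_pos (Nat.cast_pos.mpr Module.finrank_pos) hβ, fun x ↦ ⟨?_, sup_abs_repr_le_mul_house b x⟩⟩
  exact (inv_mul_le_iff₀ hb).mpr (house_le_sum_house_mul_sup_abs_repr b x)

end NumberField

theorem stmt4_general {K : Type*} [Field K] [NumberField K]
    (d : ℕ) (hd : 1 ≤ d) (hdim : Module.finrank ℚ K = d + 1)
    (σ : Fin (d + 1) → (K →+* ℂ)) (hσ : Function.Injective σ)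
    (b : Module.Basis (Fin (d + 1)) ℚ K)
    (γ : K) (hγ : γ ≠ 0) :
    ∀ A B : ℝ, 0 < A → 0 < B → ∃ c₁ c₂ : ℝ, 0 < c₁ ∧ 0 < c₂ ∧
      ∀ η : (RingOfIntegers K)ˣ,
        ‖σ 0 ((η : RingOfIntegers K) : K)‖ < 1 →
        (∀ j : Fin (d + 1), 1 ≤ (j : ℕ) →
          A * ((‖σ 0 ((η : RingOfIntegers K) : K)‖)⁻¹) ^ ((1 : ℝ) / d)
            ≤ ‖σ j ((η : RingOfIntegers K) : K)‖ ∧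
          ‖σ j ((η : RingOfIntegers K) : K)‖
            ≤ B * ((‖σ 0 ((η : RingOfIntegers K) : K)‖)⁻¹) ^ ((1 : ℝ) / d)) →
        c₁ * ((‖σ 0 ((η : RingOfIntegers K) : K)‖)⁻¹) ^ ((1 : ℝ) / d)
            ≤ (Finset.univ.sup' Finset.univ_nonempty
                fun k : Fin (d + 1) =>
                  |(b.repr (γ * ((η : RingOfIntegers K) : K)) k : ℝ)|) ∧
          (Finset.univ.sup' Finset.univ_nonempty
                fun k : Fin (d + 1) =>
                  |(b.repr (γ * ((η : RingOfIntegers K) : K)) k : ℝ)|)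
            ≤ c₂ * ((‖σ 0 ((η : RingOfIntegers K) : K)‖)⁻¹) ^ ((1 : ℝ) / d) := by
  intro A B hA _
  obtain ⟨c, C, hc, hC, hcomp⟩ := exists_pos_mul_house_le_sup_abs_repr_le_mul_house b
  have hσ_surj : Function.Surjective σ := ((Fintype.bijective_iff_injective_and_card σ).mpr
    ⟨hσ, by rw [Fintype.card_fin, Embeddings.card K ℂ, hdim]⟩).2
  let j₁ : Fin (d + 1) := ⟨1, by omega⟩
  have hγ₁ : 0 < ‖σ j₁ γ‖ := norm_pos_iff.mpr ((map_ne_zero _).mpr hγ)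
  refine ⟨c * (‖σ j₁ γ‖ * A), C * (house γ * max 1 B), mul_pos hc (mul_pos hγ₁ hA),
    mul_pos hC (mul_pos (house_pos hγ) (by positivity)), ?_⟩
  intro η hη_lt hη_conj
  set u := ((η : 𝓞 K) : K)
  set P := ‖σ 0 u‖⁻¹ ^ ((1 : ℝ) / d)
  have hu : u ≠ 0 := RingOfIntegers.coe_ne_zero_iff.mpr η.ne_zero
  have hP : 1 ≤ P := Real.one_le_rpow
    (one_le_inv_iff₀.mpr ⟨norm_pos_iff.mpr ((map_ne_zero _).mpr hu), hη_lt.le⟩) (by positivity)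
  have hu_house : house u ≤ max 1 B * P := house_le_of_forall_norm_le hσ_surj fun j ↦ by
    rcases Fin.eq_zero_or_eq_succ j with rfl | ⟨j, rfl⟩
    · exact hη_lt.le.trans (one_le_mul_of_one_le_of_one_le (le_max_left 1 B) hP)
    · exact (hη_conj _ (by simp)).2.trans (by gcongr; exact le_max_right 1 B)
  constructor
  · calc c * (‖σ j₁ γ‖ * A) * P ≤ c * ‖σ j₁ (γ * u)‖ := by
          rw [map_mul, norm_mul, mul_assoc, mul_assoc]
          gcongr
          exact (hη_conj j₁ le_rfl).1
      _ ≤ c * house (γ * u) := by gcongr; exact norm_embedding_le_house _ _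
      _ ≤ _ := (hcomp _).1
  · calc _ ≤ C * house (γ * u) := (hcomp _).2
      _ ≤ C * (house γ * (max 1 B * P)) := by
          gcongr
          exact (house_mul_le γ u).trans (by gcongr; exact house_nonneg γ)
      _ = _ := by ring

/-- `K` a real number field of degree `d+1`, with a `ℚ`-basis
`α_0 = 1, α_1, …, α_d`, embeddings `σ_0 = Id, σ_1, …, σ_d` with `σ_0` real, and
`γ ∈ K` nonzero.  If `η` is a unit of `𝓞 K` with `-1 < σ_0(η) < 1`,
`N = |σ_0(η)|⁻¹`, satisfying `|σ_j(η)| ≍ N^{1/d}` for `1 ≤ j ≤ d`, and if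
`γη = a_0 + a_1 α_1 + ⋯ + a_d α_d` with `a_k ∈ ℚ`, then
`max_k |a_k| ≍ N^{1/d}`, with constants independent of `η`. -/
theorem stmt4 {K : Type*} [Field K] [NumberField K]
    (d : ℕ) (hd : 1 ≤ d) (hdim : Module.finrank ℚ K = d + 1)
    (σ : Fin (d + 1) → (K →+* ℂ)) (hσ : Function.Injective σ)
    (hreal : ∀ x : K, (σ 0 x).im = 0)
    (b : Module.Basis (Fin (d + 1)) ℚ K) (hb0 : b 0 = 1)
    (γ : K) (hγ : γ ≠ 0) :
    ∀ A B : ℝ, 0 < A → 0 < B → ∃ c₁ c₂ : ℝ, 0 < c₁ ∧ 0 < c₂ ∧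
      ∀ η : (RingOfIntegers K)ˣ,
        ‖σ 0 ((η : RingOfIntegers K) : K)‖ < 1 →
        (∀ j : Fin (d + 1), 1 ≤ (j : ℕ) →
          A * ((‖σ 0 ((η : RingOfIntegers K) : K)‖)⁻¹) ^ ((1 : ℝ) / d)
            ≤ ‖σ j ((η : RingOfIntegers K) : K)‖ ∧
          ‖σ j ((η : RingOfIntegers K) : K)‖
            ≤ B * ((‖σ 0 ((η : RingOfIntegers K) : K)‖)⁻¹) ^ ((1 : ℝ) / d)) →
        c₁ * ((‖σ 0 ((η : RingOfIntegers K) : K)‖)⁻¹) ^ ((1 : ℝ) / d)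
            ≤ (Finset.univ.sup' Finset.univ_nonempty
                fun k : Fin (d + 1) =>
                  |(b.repr (γ * ((η : RingOfIntegers K) : K)) k : ℝ)|) ∧
          (Finset.univ.sup' Finset.univ_nonempty
                fun k : Fin (d + 1) =>
                  |(b.repr (γ * ((η : RingOfIntegers K) : K)) k : ℝ)|)
            ≤ c₂ * ((‖σ 0 ((η : RingOfIntegers K) : K)‖)⁻¹) ^ ((1 : ℝ) / d) :=
  stmt4_general d hd hdim σ hσ b γ hγ
end

section
/- Let K be a real number field of degree d+1, with embeddings σ_0 = Id, σ_1, ..., σ_d into C, unit rank r, and multiplicatively independent units ε_1, ..., ε_r. Then there exists a sequence (η_m)_{m≥1} of positive units in the ring of integers O of K such that η_m ≍ e^{−dm} and |σ_j(η_m)| ≍ e^m for all 1 ≤ j ≤ d, with implicit constants depending only on K. -/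
/-! By Dirichlet's unit theorem the logarithmic embedding maps the units onto a full lattice in
the hyperplane `∑_w mult w * x_w = 0`, so every point of that hyperplane lies within bounded
distance of the logarithmic vector of some unit. Apply this to the point whose coordinate is
`-d m` at the real place of `σ 0` and `m` at every other place, and change the sign of the unit
to make `σ 0 (η m)` positive. -/

open NumberField NumberField.Units NumberField.InfinitePlace
open NumberField.Units.dirichletUnitTheorem

theorem ZLattice.exists_forall_exists_mem_norm_sub_le {E : Type*} [NormedAddCommGroup E]
    [NormedSpace ℝ E] [FiniteDimensional ℝ E] (L : Submodule ℤ E) [DiscreteTopology L]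
    [IsZLattice ℝ L] : ∃ C, ∀ x : E, ∃ l ∈ L, ‖x - l‖ ≤ C := by
  have := ZLattice.module_free ℝ L
  have := ZLattice.module_finite ℝ L
  let b := (Module.Free.chooseBasis ℤ L).ofZLatticeBasis ℝ L
  refine ⟨∑ i, ‖b i‖, fun x => ⟨ZSpan.floor b x, ?_, ZSpan.norm_fract_le b x⟩⟩
  exact ((Module.Free.chooseBasis ℤ L).ofZLatticeBasis_span ℝ L).le (ZSpan.floor b x).2

theorem Real.mem_Icc_of_abs_log_sub_le {a b C : ℝ} (ha : 0 < a) (h : |Real.log a - b| ≤ C) :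
    a ∈ Set.Icc (Real.exp (-C) * Real.exp b) (Real.exp C * Real.exp b) := by
  rw [abs_le] at h
  rw [← Real.exp_add, ← Real.exp_add, ← Real.exp_log ha]
  exact ⟨Real.exp_le_exp.mpr (by linarith), Real.exp_le_exp.mpr (by linarith)⟩

namespace NumberField

variable {K : Type*} [Field K]

theorem InfinitePlace.mk_ne_mk_of_isReal {φ ψ : K →+* ℂ} (hφ : ComplexEmbedding.IsReal φ)
    (h : φ ≠ ψ) : mk φ ≠ mk ψ := by
  rwa [Ne, mk_eq_iff, ComplexEmbedding.isReal_iff.mp hφ, or_self]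

theorem InfinitePlace.abs_le_abs_mult_mul (w : InfinitePlace K) (a : ℝ) :
    |a| ≤ |mult w * a| := by
  rw [abs_mul, Nat.abs_cast]
  exact le_mul_of_one_le_left (abs_nonneg a) one_le_mult

variable [NumberField K]

theorem InfinitePlace.sum_mult_mul_ite_eq_zero [DecidableEq (InfinitePlace K)] {d : ℕ}
    (hdim : Module.finrank ℚ K = d + 1) {w₁ : InfinitePlace K} (hw₁ : IsReal w₁) (t : ℝ) :
    ∑ w, (mult w : ℝ) * (if w = w₁ then -(d * t) else t) = 0 := by
  have hterm : ∀ w, (mult w : ℝ) * (if w = w₁ then -(d * t) else t) =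
      mult w * t - if w = w₁ then (d + 1) * t else 0 := by
    intro w
    split_ifs with hw
    · rw [hw, hw₁.mult_eq_one]; push_cast; ring
    · ring
  simp only [hterm, Finset.sum_sub_distrib, ← Finset.sum_mul, Finset.sum_ite_eq', Finset.mem_univ,
    if_true]
  rw [← Nat.cast_sum, sum_mult_eq, hdim]
  push_cast
  ring

-- The coordinate at `w₀`, which `logEmbedding` drops, is recovered from the product formula.
open scoped Classical in
theorem Units.mult_w₀_mul_log_sub_eq (u : (𝓞 K)ˣ) {x : InfinitePlace K → ℝ}
    (hx : ∑ w, (mult w : ℝ) * x w = 0) :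
    mult (w₀ : InfinitePlace K) * (Real.log (w₀ (u : K)) - x w₀) =
      -∑ w : {w : InfinitePlace K // w ≠ w₀},
        (logEmbedding K (Additive.ofMul u) w - mult w.1 * x w.1) := by
  rw [Fintype.sum_eq_add_sum_subtype_ne _ w₀] at hx
  rw [Finset.sum_sub_distrib, sum_logEmbedding_component]
  linarith

variable (K) in
theorem Units.exists_forall_abs_log_sub_le :
    ∃ C, ∀ x : InfinitePlace K → ℝ, ∑ w, (mult w : ℝ) * x w = 0 →
      ∃ u : (𝓞 K)ˣ, ∀ w, |Real.log (w (u : K)) - x w| ≤ C := by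
  classical
  obtain ⟨C, hC⟩ := ZLattice.exists_forall_exists_mem_norm_sub_le (unitLattice K)
  have hC0 : 0 ≤ C := (norm_nonneg _).trans (hC 0).choose_spec.2
  refine ⟨(Fintype.card {w : InfinitePlace K // w ≠ w₀} + 1) * C, fun x hx => ?_⟩
  obtain ⟨_, ⟨u, -, rfl⟩, hu⟩ := hC fun w => mult w.1 * x w.1
  have hne : ∀ w : {w : InfinitePlace K // w ≠ w₀},
      |logEmbedding K u w - mult w.1 * x w.1| ≤ C := fun w =>
    (norm_le_pi_norm (_ : logSpace K) w).trans ((norm_sub_rev _ _).trans_le hu)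
  refine ⟨u.toMul, fun w => ?_⟩
  by_cases hw : w = w₀
  · subst hw
    calc |Real.log (w₀ (u.toMul : K)) - x w₀|
        ≤ |mult (w₀ : InfinitePlace K) * (Real.log (w₀ (u.toMul : K)) - x w₀)| :=
          abs_le_abs_mult_mul _ _
      _ ≤ ∑ w : {w : InfinitePlace K // w ≠ w₀}, |logEmbedding K u w - mult w.1 * x w.1| := by
          rw [mult_w₀_mul_log_sub_eq u.toMul hx, abs_neg]
          exact Finset.abs_sum_le_sum_abs _ _
      _ ≤ ∑ _w : {w : InfinitePlace K // w ≠ w₀}, C := Finset.sum_le_sum fun w _ => hne w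
      _ = Fintype.card {w : InfinitePlace K // w ≠ w₀} * C := by
          rw [Finset.sum_const, Finset.card_univ, nsmul_eq_mul]
      _ ≤ _ := mul_le_mul_of_nonneg_right (le_add_of_nonneg_right zero_le_one) hC0
  · calc |Real.log (w (u.toMul : K)) - x w|
        ≤ |mult w * (Real.log (w (u.toMul : K)) - x w)| := abs_le_abs_mult_mul _ _
      _ ≤ C := by rw [mul_sub]; exact hne ⟨w, hw⟩
      _ ≤ _ := le_mul_of_one_le_left hC0 (le_add_of_nonneg_left (Nat.cast_nonneg _))

theorem Units.exists_re_pos_norm_eq {φ : K →+* ℂ} (hφ : ∀ x : K, (φ x).im = 0) (u : (𝓞 K)ˣ) :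
    ∃ v : (𝓞 K)ˣ, 0 < (φ (v : K)).re ∧ ∀ ψ : K →+* ℂ, ‖ψ (v : K)‖ = ‖ψ (u : K)‖ := by
  have hre : (φ (u : K)).re ≠ 0 := fun h =>
    (map_ne_zero φ).mpr (by simp) (Complex.ext h (hφ _))
  rcases hre.lt_or_gt with hneg | hpos
  · refine ⟨-u, ?_, fun ψ => ?_⟩ <;> simp [hneg]
  · exact ⟨u, hpos, fun _ => rfl⟩

end NumberField

theorem stmt12_general {K : Type*} [Field K] [NumberField K]
    (d : ℕ) (hdim : Module.finrank ℚ K = d + 1)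
    (σ : Fin (d + 1) → (K →+* ℂ)) (hσ : Function.Injective σ)
    (hreal : ∀ x : K, (σ 0 x).im = 0) :
    ∃ c₁ c₂ c₃ c₄ : ℝ, 0 < c₁ ∧ 0 < c₂ ∧ 0 < c₃ ∧ 0 < c₄ ∧
      ∃ η : ℕ → (RingOfIntegers K)ˣ, ∀ m : ℕ, 1 ≤ m →
        0 < (σ 0 (((η m : RingOfIntegers K)) : K)).re ∧
        c₁ * Real.exp (-(d * m : ℝ))
            ≤ ‖σ 0 (((η m : RingOfIntegers K)) : K)‖ ∧
        ‖σ 0 (((η m : RingOfIntegers K)) : K)‖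
            ≤ c₂ * Real.exp (-(d * m : ℝ)) ∧
        ∀ j : Fin (d + 1), 1 ≤ (j : ℕ) →
          c₃ * Real.exp (m : ℝ)
              ≤ ‖σ j (((η m : RingOfIntegers K)) : K)‖ ∧
          ‖σ j (((η m : RingOfIntegers K)) : K)‖
              ≤ c₄ * Real.exp (m : ℝ) := by
  classical
  have hσ₀ : ComplexEmbedding.IsReal (σ 0) :=
    ComplexEmbedding.isReal_iff.mpr (RingHom.ext fun x => Complex.conj_eq_iff_im.mpr (hreal x))
  let w₁ := InfinitePlace.mk (σ 0)
  let target (m : ℕ) (w : InfinitePlace K) : ℝ := if w = w₁ then -(d * m) else m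
  obtain ⟨C, hC⟩ := Units.exists_forall_abs_log_sub_le K
  choose u hu using fun m : ℕ => hC (target m)
    (InfinitePlace.sum_mult_mul_ite_eq_zero hdim (InfinitePlace.isReal_mk_iff.mpr hσ₀) m)
  choose η hη_pos hη_norm using fun m => Units.exists_re_pos_norm_eq hreal (u m)
  have hbound (m : ℕ) (j : Fin (d + 1)) : ‖σ j (η m : K)‖ ∈
      Set.Icc (Real.exp (-C) * Real.exp (target m (.mk (σ j))))
        (Real.exp C * Real.exp (target m (.mk (σ j)))) := by
    rw [hη_norm]
    exact Real.mem_Icc_of_abs_log_sub_le (norm_pos_iff.mpr ((map_ne_zero _).mpr (by simp)))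
      (hu m (.mk (σ j)))
  refine ⟨_, _, _, _, Real.exp_pos (-C), Real.exp_pos C, Real.exp_pos (-C), Real.exp_pos C,
    η, fun m _ => ⟨hη_pos m, ?_⟩⟩
  have h₀ := hbound m 0
  simp only [target, w₁, if_pos] at h₀
  refine ⟨h₀.1, h₀.2, fun j hj => ?_⟩
  have hj₀ : j ≠ 0 := by rintro rfl; simp at hj
  have hw : InfinitePlace.mk (σ j) ≠ w₁ :=
    (InfinitePlace.mk_ne_mk_of_isReal hσ₀ (hσ.ne hj₀.symm)).symm
  simpa only [Set.mem_Icc, target, if_neg hw] using hbound m j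

/-- `K` a real number field of degree `d+1` with embeddings
`σ_0 = Id, σ_1, …, σ_d` into `ℂ`, `σ_0` real.  There is a sequence `(η_m)_{m≥1}`
of positive units of `𝓞 K` with `η_m ≍ e^{−dm}` and `|σ_j(η_m)| ≍ e^m` for
`1 ≤ j ≤ d`, the implicit constants depending only on `K`. -/
theorem stmt12 {K : Type*} [Field K] [NumberField K]
    (d : ℕ) (hd : 1 ≤ d) (hdim : Module.finrank ℚ K = d + 1)
    (σ : Fin (d + 1) → (K →+* ℂ)) (hσ : Function.Injective σ)
    (hreal : ∀ x : K, (σ 0 x).im = 0) :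
    ∃ c₁ c₂ c₃ c₄ : ℝ, 0 < c₁ ∧ 0 < c₂ ∧ 0 < c₃ ∧ 0 < c₄ ∧
      ∃ η : ℕ → (RingOfIntegers K)ˣ, ∀ m : ℕ, 1 ≤ m →
        0 < (σ 0 (((η m : RingOfIntegers K)) : K)).re ∧
        c₁ * Real.exp (-(d * m : ℝ))
            ≤ ‖σ 0 (((η m : RingOfIntegers K)) : K)‖ ∧
        ‖σ 0 (((η m : RingOfIntegers K)) : K)‖
            ≤ c₂ * Real.exp (-(d * m : ℝ)) ∧
        ∀ j : Fin (d + 1), 1 ≤ (j : ℕ) →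
          c₃ * Real.exp (m : ℝ)
              ≤ ‖σ j (((η m : RingOfIntegers K)) : K)‖ ∧
          ‖σ j (((η m : RingOfIntegers K)) : K)‖
              ≤ c₄ * Real.exp (m : ℝ) :=
  stmt12_general d hdim σ hσ hreal
end

section
/- Let α be a real algebraic number of degree d+1, K = Q(α), and let (η_m)_{m≥1} be a sequence of positive units in the ring of integers O of K satisfying η_m ≍ e^{−dm} and |σ_j(η_m)| ≍ e^m for 1 ≤ j ≤ d, where σ_0 = Id, σ_1, ..., σ_d are the embeddings of K into C. Let λ' > 0. Then there exists a finite set Γ = Γ(λ') of nonzero elements of K such that every integer polynomial P(X) of degree at most d with P(α) ≠ 0 and |P(α)| ≤ λ'·H(P)^{−d} satisfies P(α) = γ·η_m for some γ ∈ Γ and some positive integer m. -/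
/-!
Write `x = P(α)` and pick `m` with `H(P) ≤ e^m ≤ e·H(P)`. At the real place the smallness of
`P(α)` and the size `≍ e^{-dm}` of `η_m` bound `x / η_m`; at every other place `|σ_j(x)| ≪ H(P)`
while `|σ_j(η_m)| ≍ e^m ≥ H(P)`. So all conjugates of `γ = x / η_m` are bounded independently of
`P`, and `y^d γ` is an algebraic integer as soon as `y α` is. Algebraic integers of `K` with
bounded conjugates form a finite set.
-/

open NumberField

/-- Naive height of an integer polynomial: max of absolute values of coefficients. -/
def intPolyHeight (P : Polynomial ℤ) : ℕ :=
  P.support.sup fun k => (P.coeff k).natAbs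

open Polynomial Real

lemma natAbs_coeff_le_intPolyHeight (P : ℤ[X]) (i : ℕ) :
    (P.coeff i).natAbs ≤ intPolyHeight P := by
  by_cases h : i ∈ P.support
  · exact Finset.le_sup (f := fun k => (P.coeff k).natAbs) h
  · simp [notMem_support_iff.1 h]

lemma one_le_intPolyHeight {P : ℤ[X]} (hP : P ≠ 0) : 1 ≤ intPolyHeight P :=
  (Int.natAbs_pos.2 (leadingCoeff_ne_zero.2 hP)).trans_le (natAbs_coeff_le_intPolyHeight P _)

lemma norm_aeval_le_intPolyHeight {R : Type*} [SeminormedRing R] [NormOneClass R] {P : ℤ[X]}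
    {d : ℕ} (hP : P.natDegree ≤ d) (z : R) :
    ‖aeval z P‖ ≤ (d + 1) * intPolyHeight P * max 1 ‖z‖ ^ d := by
  rw [aeval_eq_sum_range' (Nat.lt_succ_of_le hP)]
  calc ‖∑ i ∈ Finset.range (d + 1), P.coeff i • z ^ i‖
      ≤ ∑ i ∈ Finset.range (d + 1), ‖P.coeff i • z ^ i‖ := norm_sum_le _ _
    _ ≤ ∑ _i ∈ Finset.range (d + 1), (intPolyHeight P : ℝ) * max 1 ‖z‖ ^ d := by
        refine Finset.sum_le_sum fun i hi => (norm_zsmul_le _ _).trans ?_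
        gcongr
        · rw [Int.norm_eq_abs, ← Int.cast_abs, Int.abs_eq_natAbs]
          exact_mod_cast natAbs_coeff_le_intPolyHeight P i
        · calc ‖z ^ i‖ ≤ ‖z‖ ^ i := norm_pow_le z i
            _ ≤ max 1 ‖z‖ ^ i := by gcongr; exact le_max_right _ _
            _ ≤ max 1 ‖z‖ ^ d :=
              pow_le_pow_right₀ (le_max_left _ _) (Nat.le_of_lt_succ (Finset.mem_range.1 hi))
    _ = (d + 1) * intPolyHeight P * max 1 ‖z‖ ^ d := by
        rw [Finset.sum_const, Finset.card_range, nsmul_eq_mul]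
        push_cast
        ring

theorem IsIntegral.pow_smul_aeval {R A : Type*} [CommRing R] [CommRing A] [Algebra R A] {x : A}
    {y : R} (hx : IsIntegral R (y • x)) {P : R[X]} {d : ℕ} (hP : P.natDegree ≤ d) :
    IsIntegral R (y ^ d • aeval x P) := by
  rw [aeval_eq_sum_range' (Nat.lt_succ_of_le hP), Finset.smul_sum]
  refine IsIntegral.sum _ fun i hi => ?_
  obtain ⟨k, rfl⟩ := Nat.exists_eq_add_of_le' (Nat.le_of_lt_succ (Finset.mem_range.1 hi))
  have : y ^ (k + i) • P.coeff i • x ^ i = (P.coeff i * y ^ k) • (y • x) ^ i := by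
    rw [_root_.smul_pow, smul_smul, smul_smul, pow_add]
    ring_nf
  rw [this]
  exact (hx.pow i).smul _

theorem NumberField.finite_of_isIntegral_zsmul_of_norm_le (K : Type*) [Field K] [NumberField K]
    {y : ℤ} (hy : y ≠ 0) (B : ℝ) :
    {x : K | IsIntegral ℤ (y • x) ∧ ∀ φ : K →+* ℂ, ‖φ x‖ ≤ B}.Finite := by
  refine ((Embeddings.finite_of_norm_le K ℂ (|y| * B)).preimage
    (fun a _ b _ hab => smul_right_injective K hy hab)).subset fun x hx => ⟨hx.1, fun φ => ?_⟩
  rw [map_zsmul, zsmul_eq_mul, norm_mul, Complex.norm_intCast, Int.cast_abs]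
  exact mul_le_mul_of_nonneg_left (hx.2 φ) (abs_nonneg _)

lemma exists_one_le_nat_exp_mem_Icc {H : ℝ} (hH : 1 ≤ H) :
    ∃ m : ℕ, 1 ≤ m ∧ exp m ∈ Set.Icc H (exp 1 * H) := by
  have hlog : 0 ≤ log H := log_nonneg hH
  refine ⟨⌊log H⌋₊ + 1, Nat.le_add_left 1 _, ?_, ?_⟩
  · calc H = exp (log H) := (exp_log (by linarith)).symm
      _ ≤ exp (⌊log H⌋₊ + 1 : ℕ) := by
        gcongr
        push_cast
        exact (Nat.lt_floor_add_one _).le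
  · calc exp (⌊log H⌋₊ + 1 : ℕ) ≤ exp (log H + 1) := by
          gcongr
          push_cast
          linarith [Nat.floor_le hlog]
      _ = exp 1 * H := by rw [exp_add, exp_log (by linarith), mul_comm]

lemma div_le_mul_exp_one_pow {a b lam c H : ℝ} {d m : ℕ} (hlam : 0 ≤ lam) (hc : 0 < c)
    (hH : 0 < H) (ha : a ≤ lam * H ^ (-(d : ℤ))) (hb : c * exp (-(d * m : ℝ)) ≤ b)
    (hm : exp m ≤ exp 1 * H) : a / b ≤ lam / c * exp 1 ^ d := by
  rw [zpow_neg, zpow_natCast] at ha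
  rw [exp_neg, exp_nat_mul] at hb
  calc a / b ≤ (lam * (H ^ d)⁻¹) / (c * (exp m ^ d)⁻¹) :=
        div_le_div₀ (by positivity) ha (by positivity) hb
    _ = lam / c * (exp m / H) ^ d := by
        rw [div_pow]
        field_simp
    _ ≤ lam / c * exp 1 ^ d := by
        gcongr
        rwa [div_le_iff₀ hH]

lemma norm_map_aeval_div_le {K L : Type*} [Field K] [NormedField L] (φ : K →+* L) (α : K)
    {u : K} {P : ℤ[X]} {d m : ℕ} {c : ℝ} (hc : 0 < c) (hP : P.natDegree ≤ d)
    (hH : intPolyHeight P ≤ exp m) (hu : c * exp m ≤ ‖φ u‖) :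
    ‖φ (aeval α P / u)‖ ≤ (d + 1) * max 1 ‖φ α‖ ^ d / c := by
  have hφ : φ (aeval α P) = aeval (φ α) P := (aeval_algHom_apply φ.toIntAlgHom α P).symm
  rw [map_div₀, norm_div, hφ]
  calc ‖aeval (φ α) P‖ / ‖φ u‖
      ≤ (d + 1) * intPolyHeight P * max 1 ‖φ α‖ ^ d / (c * exp m) :=
        div_le_div₀ (by positivity) (norm_aeval_le_intPolyHeight hP _) (by positivity) hu
    _ ≤ (d + 1) * exp m * max 1 ‖φ α‖ ^ d / (c * exp m) := by gcongr
    _ = (d + 1) * max 1 ‖φ α‖ ^ d / c := by field_simp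

theorem stmt13_general {K : Type*} [Field K] [NumberField K]
    (d : ℕ) (hdim : Module.finrank ℚ K = d + 1)
    (α : K)
    (σ : Fin (d + 1) → (K →+* ℂ)) (hσ : Function.Injective σ)
    (η : ℕ → (RingOfIntegers K)ˣ)
    (c₁ c₂ c₃ c₄ : ℝ) (hc₁ : 0 < c₁) (hc₃ : 0 < c₃)
    (hη : ∀ m : ℕ, 1 ≤ m →
      0 < (σ 0 (((η m : RingOfIntegers K)) : K)).re ∧
      c₁ * Real.exp (-(d * m : ℝ))
          ≤ ‖σ 0 (((η m : RingOfIntegers K)) : K)‖ ∧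
      ‖σ 0 (((η m : RingOfIntegers K)) : K)‖
          ≤ c₂ * Real.exp (-(d * m : ℝ)) ∧
      ∀ j : Fin (d + 1), 1 ≤ (j : ℕ) →
        c₃ * Real.exp (m : ℝ)
            ≤ ‖σ j (((η m : RingOfIntegers K)) : K)‖ ∧
        ‖σ j (((η m : RingOfIntegers K)) : K)‖
            ≤ c₄ * Real.exp (m : ℝ))
    (lam : ℝ) (hlam : 0 < lam) :
    ∃ Γ : Finset K, (∀ γ ∈ Γ, γ ≠ 0) ∧
      ∀ P : Polynomial ℤ, P.natDegree ≤ d → Polynomial.aeval α P ≠ 0 →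
        ‖σ 0 (Polynomial.aeval α P)‖
            ≤ lam * (intPolyHeight P : ℝ) ^ (-(d : ℤ)) →
        ∃ γ ∈ Γ, ∃ m : ℕ, 1 ≤ m ∧
          Polynomial.aeval α P = γ * ((η m : RingOfIntegers K) : K) := by
  classical
  have hσsurj : Function.Surjective σ := ((Fintype.bijective_iff_injective_and_card σ).2
    ⟨hσ, by rw [Embeddings.card K ℂ, hdim, Fintype.card_fin]⟩).2
  obtain ⟨y, hy, hyα⟩ := ((IsFractionRing.isAlgebraic_iff ℤ ℚ K).2
    (Algebra.IsAlgebraic.isAlgebraic α)).exists_integral_multiple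
  obtain ⟨M, hM⟩ := Finite.exists_le fun j => (d + 1) * max 1 ‖σ j α‖ ^ d / c₃
  have hfin := finite_of_isIntegral_zsmul_of_norm_le K (pow_ne_zero d hy)
    (max (lam / c₁ * exp 1 ^ d) M)
  refine ⟨hfin.toFinset.erase 0, fun γ hγ => Finset.ne_of_mem_erase hγ, ?_⟩
  intro P hdeg hne hsmall
  have hH : (1 : ℝ) ≤ intPolyHeight P :=
    mod_cast one_le_intPolyHeight fun h => hne (by simp [h])
  obtain ⟨m, hm, hHm, hmH⟩ := exists_one_le_nat_exp_mem_Icc hH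
  obtain ⟨-, hη₀, -, hηj⟩ := hη m hm
  have hu : ((η m : 𝓞 K) : K) ≠ 0 := by simp
  refine ⟨aeval α P / (η m : 𝓞 K), Finset.mem_erase.2 ⟨div_ne_zero hne hu,
    hfin.mem_toFinset.2 ⟨?_, fun φ => ?_⟩⟩, m, hm, (div_mul_cancel₀ _ hu).symm⟩
  · rw [div_eq_mul_inv, ← map_units_inv (algebraMap (𝓞 K) K), ← smul_mul_assoc]
    exact (hyα.pow_smul_aeval hdeg).mul (RingOfIntegers.isIntegral_coe _)
  · obtain ⟨j, rfl⟩ := hσsurj φ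
    rcases eq_or_ne j 0 with rfl | hj
    · refine le_max_of_le_left ?_
      rw [map_div₀, norm_div]
      exact div_le_mul_exp_one_pow hlam.le hc₁ (by linarith) hsmall hη₀ hmH
    · refine le_max_of_le_right ((norm_map_aeval_div_le _ α hc₃ hdeg hHm ?_).trans (hM j))
      exact (hηj j (Nat.one_le_iff_ne_zero.2 (Fin.val_ne_zero_iff.2 hj))).1

/-- Let `α` generate the real number field `K = ℚ(α)` of degree
`d+1`, with embeddings `σ_0 = Id, σ_1, …, σ_d` (`σ_0` real), and let
`(η_m)_{m≥1}` be a sequence of positive units with `η_m ≍ e^{−dm}` and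
`|σ_j(η_m)| ≍ e^m` for `1 ≤ j ≤ d`.  For every `λ' > 0` there is a finite set
`Γ` of nonzero elements of `K` such that every integer polynomial `P` of degree
at most `d` with `P(α) ≠ 0` and `|P(α)| ≤ λ'·H(P)^{−d}` satisfies
`P(α) = γ·η_m` for some `γ ∈ Γ` and some `m ≥ 1`. -/
theorem stmt13 {K : Type*} [Field K] [NumberField K]
    (d : ℕ) (hd : 1 ≤ d) (hdim : Module.finrank ℚ K = d + 1)
    (α : K) (hα : (minpoly ℚ α).natDegree = d + 1)
    (σ : Fin (d + 1) → (K →+* ℂ)) (hσ : Function.Injective σ)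
    (hreal : ∀ x : K, (σ 0 x).im = 0)
    (η : ℕ → (RingOfIntegers K)ˣ)
    (c₁ c₂ c₃ c₄ : ℝ) (hc₁ : 0 < c₁) (hc₂ : 0 < c₂) (hc₃ : 0 < c₃) (hc₄ : 0 < c₄)
    (hη : ∀ m : ℕ, 1 ≤ m →
      0 < (σ 0 (((η m : RingOfIntegers K)) : K)).re ∧
      c₁ * Real.exp (-(d * m : ℝ))
          ≤ ‖σ 0 (((η m : RingOfIntegers K)) : K)‖ ∧
      ‖σ 0 (((η m : RingOfIntegers K)) : K)‖
          ≤ c₂ * Real.exp (-(d * m : ℝ)) ∧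
      ∀ j : Fin (d + 1), 1 ≤ (j : ℕ) →
        c₃ * Real.exp (m : ℝ)
            ≤ ‖σ j (((η m : RingOfIntegers K)) : K)‖ ∧
        ‖σ j (((η m : RingOfIntegers K)) : K)‖
            ≤ c₄ * Real.exp (m : ℝ))
    (lam : ℝ) (hlam : 0 < lam) :
    ∃ Γ : Finset K, (∀ γ ∈ Γ, γ ≠ 0) ∧
      ∀ P : Polynomial ℤ, P.natDegree ≤ d → Polynomial.aeval α P ≠ 0 →
        ‖σ 0 (Polynomial.aeval α P)‖
            ≤ lam * (intPolyHeight P : ℝ) ^ (-(d : ℤ)) →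
        ∃ γ ∈ Γ, ∃ m : ℕ, 1 ≤ m ∧
          Polynomial.aeval α P = γ * ((η m : RingOfIntegers K) : K) :=
  stmt13_general d hdim α σ hσ η c₁ c₂ c₃ c₄ hc₁ hc₃ hη lam hlam
end
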